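/- Let p be a positive integer, let a, b : Fin n → ℝ, and let S₁, …, S_L be a partition of the index set Fin n into nonempty segments. Then the total DIFF score is at least the sum of per-segment lower bounds obtained from segment averages: ∑_{i} |a i − b i|^p ≥ ∑_{j=1}^{L} |S_j| · | (∑_{i ∈ S_j} a i)/|S_j| − (∑_{i ∈ S_j} b i)/|S_j| |^p. (Paper's segment-aggregate lower bound on SUM OVER DIFF(p), obtained by applying Theorem 1 to each pair of matching segments and summing.) -/

import Mathlib

/-!
On each segment, the triangle inequality and Jensen's inequality for the convex map `x ↦ x ^ p`
on `[0, ∞)` bound `|S| · |avg a - avg b| ^ p` by `∑_{i ∈ S} |a i - b i| ^ p`. Summing over the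
disjoint segments gives at most the full sum, since the remaining terms are nonnegative.
-/

open Finset

lemma card_mul_abs_sum_div_card_pow_le {ι : Type*} (s : Finset ι) (f : ι → ℝ) (p : ℕ) :
    (#s : ℝ) * |(∑ i ∈ s, f i) / #s| ^ p ≤ ∑ i ∈ s, |f i| ^ p := by
  obtain rfl | hs := s.eq_empty_or_nonempty
  · simp
  have hcard : (0 : ℝ) < #s := by exact_mod_cast hs.card_pos
  have jensen := Real.pow_arith_mean_le_arith_mean_pow s (fun _ ↦ (#s : ℝ)⁻¹) (fun i ↦ |f i|)
    (fun _ _ ↦ by positivity) (by simp [hcard.ne']) (fun _ _ ↦ abs_nonneg _) p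
  rw [← mul_sum, ← mul_sum] at jensen
  calc (#s : ℝ) * |(∑ i ∈ s, f i) / #s| ^ p
      ≤ #s * ((#s : ℝ)⁻¹ * ∑ i ∈ s, |f i|) ^ p := by
        rw [abs_div, abs_of_pos hcard, div_eq_inv_mul]
        gcongr
        exact abs_sum_le_sum_abs _ _
    _ ≤ #s * ((#s : ℝ)⁻¹ * ∑ i ∈ s, |f i| ^ p) := by gcongr
    _ = ∑ i ∈ s, |f i| ^ p := by field_simp

lemma sum_sum_le_sum_of_disjoint {ι κ α : Type*} [Fintype ι] [DecidableEq ι] [Fintype κ]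
    [AddCommMonoid α] [PartialOrder α] [IsOrderedAddMonoid α]
    (S : κ → Finset ι) (hdisj : ∀ j j', j ≠ j' → Disjoint (S j) (S j'))
    (g : ι → α) (hg : ∀ i, 0 ≤ g i) :
    ∑ j, ∑ i ∈ S j, g i ≤ ∑ i, g i := by
  rw [← sum_biUnion fun j _ j' _ h ↦ hdisj j j' h]
  exact sum_le_univ_sum_of_nonneg hg

theorem sum_diff_ge_segment_avg_bound_general (p n L : ℕ)
    (a b : Fin n → ℝ) (S : Fin L → Finset (Fin n))
    (hdisj : ∀ j j', j ≠ j' → Disjoint (S j) (S j')) :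
    ∑ i, |a i - b i| ^ p ≥
      ∑ j, ((S j).card : ℝ) *
        |(∑ i ∈ S j, a i) / ((S j).card : ℝ) -
          (∑ i ∈ S j, b i) / ((S j).card : ℝ)| ^ p := by
  calc ∑ j, ((S j).card : ℝ) *
        |(∑ i ∈ S j, a i) / ((S j).card : ℝ) - (∑ i ∈ S j, b i) / ((S j).card : ℝ)| ^ p
      = ∑ j, (#(S j) : ℝ) * |(∑ i ∈ S j, (a i - b i)) / #(S j)| ^ p := by
        simp only [sum_sub_distrib, sub_div]
    _ ≤ ∑ j, ∑ i ∈ S j, |a i - b i| ^ p :=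
        sum_le_sum fun j _ ↦ card_mul_abs_sum_div_card_pow_le (S j) (fun i ↦ a i - b i) p
    _ ≤ ∑ i, |a i - b i| ^ p :=
        sum_sum_le_sum_of_disjoint S hdisj _ fun _ ↦ by positivity

/-- Segment-aggregate lower bound on SUM OVER DIFF(p): the total DIFF score is at
least the sum over segments of (segment count) times DIFF of segment averages. -/
theorem sum_diff_ge_segment_avg_bound (p n L : ℕ) (hp : 0 < p)
    (a b : Fin n → ℝ) (S : Fin L → Finset (Fin n))
    (hne : ∀ j, (S j).Nonempty)
    (hdisj : ∀ j j', j ≠ j' → Disjoint (S j) (S j'))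
    (hcover : ∀ i : Fin n, ∃ j, i ∈ S j) :
    ∑ i, |a i - b i| ^ p ≥
      ∑ j, ((S j).card : ℝ) *
        |(∑ i ∈ S j, a i) / ((S j).card : ℝ) -
          (∑ i ∈ S j, b i) / ((S j).card : ℝ)| ^ p :=
  sum_diff_ge_segment_avg_bound_general p n L a b S hdisj
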